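/- The function k ↦ sup_{p ∈ (0,1)} L(k,p) is strictly decreasing for 1 ≤ k ≤ 8 and strictly increasing for k ≥ 8 (i.e., it is unimodal with minimum at k = 8). -/

import Mathlib

open Real Set Filter

/-- Expected number of tests per person in the Dorfman two-stage procedure
with group size `k` and prevalence `p`: `E 1 p = 1` and
`E k p = 1 - (1-p)^k + 1/k` for `k ≥ 2`. -/
noncomputable def E (k : ℕ) (p : ℝ) : ℝ :=
  if k = 1 then 1 else 1 - (1 - p) ^ k + 1 / k

/-- Optimal expected number of tests per person: infimum over group sizes `k ≥ 1`. -/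
noncomputable def Estar (p : ℝ) : ℝ := ⨅ k : ℕ+, E k p

/-- Loss of using group size `k` at prevalence `p`. -/
noncomputable def L (k : ℕ) (p : ℝ) : ℝ := E k p - Estar p

/-!
Write `M k` for `supLoss k`, and `q = 1 - p`. Since `L k p = sup_j (E k p - E j p)`, `M k` is the
supremum of `q^j - q^k + 1/k - 1/j` over `q ∈ (0,1)` and group sizes `j`; the pairs with `j = 1`
or `j ≥ k` contribute at most `1/k`, and letting `q → 1` and then `j → ∞` gives `M k ≥ 1/k`.

For `2 ≤ k ≤ 7` the polynomial bounds `q^j - q^k ≤ 1/j` give `M k = 1/k`, and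
`q^j - q^8 ≤ 1/j + 1/57` gives `M 8 ≤ 1/8 + 1/57 < 1/7`, since `1/7 - 1/8 = 1/56`.

For `k ≥ 8` one has `M k > 1/k`, so `M k` is approached by pairs with `2 ≤ j < k` and
`q^j - q^k ≥ 1/j`. Replacing `q` by `q' = q^(k/(k+1))` keeps `q'^(k+1) = q^k` but raises `q^j` by
at least `1/((k+1)(k-j))`, which is more than the `1/(k(k+1))` lost in the term `1/k`.
-/

namespace Real

lemma one_add_mul_one_sub_le_rpow_neg {q a : ℝ} (hq : 0 < q) (ha : 0 ≤ a) :
    1 + a * (1 - q) ≤ q ^ (-a) :=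
  calc 1 + a * (1 - q) ≤ 1 + log q * -a := by nlinarith [log_le_sub_one_of_pos hq]
    _ ≤ exp (log q * -a) := by linarith [add_one_le_exp (log q * -a)]
    _ = q ^ (-a) := (rpow_def_of_pos hq _).symm

lemma rpow_mul_le_rpow_sub_sub_rpow {q : ℝ} (hq : 0 < q) (x : ℝ) {a : ℝ} (ha : 0 ≤ a) :
    q ^ x * (a * (1 - q)) ≤ q ^ (x - a) - q ^ x :=
  calc q ^ x * (a * (1 - q)) ≤ q ^ x * (q ^ (-a) - 1) := by
        gcongr
        linarith [one_add_mul_one_sub_le_rpow_neg hq ha]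
    _ = q ^ (x - a) - q ^ x := by rw [sub_eq_add_neg x, rpow_add hq]; ring

end Real

lemma one_div_mul_sub_le_pow_mul_one_sub {q : ℝ} (hq : 0 ≤ q) {j k : ℕ} (hjk : j < k)
    (h : 1 / (j : ℝ) ≤ q ^ j - q ^ k) : 1 / ((j : ℝ) * (k - j)) ≤ q ^ j * (1 - q) := by
  have hkj : (0 : ℝ) < k - j := sub_pos.2 (by exact_mod_cast hjk)
  have bernoulli := one_add_mul_le_pow (a := q - 1) (by linarith) (k - j)
  rw [add_sub_cancel, Nat.cast_sub hjk.le] at bernoulli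
  have : q ^ j - q ^ k ≤ (k - j) * (q ^ j * (1 - q)) :=
    calc q ^ j - q ^ k = q ^ j * (1 - q ^ (k - j)) := by
          rw [mul_sub, mul_one, ← pow_add, Nat.add_sub_cancel' hjk.le]
      _ ≤ q ^ j * ((k - j) * (1 - q)) := by gcongr; linarith
      _ = (k - j) * (q ^ j * (1 - q)) := by ring
  rw [← div_div, div_le_iff₀' hkj]
  linarith

lemma exists_pow_sub_pow_succ_ge {q : ℝ} (hq0 : 0 < q) (hq1 : q < 1) {j k : ℕ} (hj : 1 ≤ j)
    (hjk : j < k) (h : 1 / (j : ℝ) ≤ q ^ j - q ^ k) :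
    ∃ q' ∈ Ioo (0 : ℝ) 1,
      q ^ j - q ^ k + 1 / (((k : ℝ) + 1) * (k - j)) ≤ q' ^ j - q' ^ (k + 1) := by
  have hk1 : (0 : ℝ) < k + 1 := by positivity
  have hj0 : (0 : ℝ) < j := by exact_mod_cast hj
  have hk0 : (0 : ℝ) < k := by exact_mod_cast (by omega : 0 < k)
  have hkj : (0 : ℝ) < k - j := sub_pos.2 (by exact_mod_cast hjk)
  set q' := q ^ ((k : ℝ) / (k + 1))
  refine ⟨q', ⟨rpow_pos_of_pos hq0 _, rpow_lt_one hq0.le hq1 (by positivity)⟩, ?_⟩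
  have hq'k : q' ^ (k + 1) = q ^ k := by
    rw [← rpow_natCast, ← rpow_mul hq0.le, ← rpow_natCast]
    congr 1
    push_cast
    field_simp
  have hq'j : q' ^ j = q ^ ((j : ℝ) - j / (k + 1)) := by
    rw [← rpow_natCast, ← rpow_mul hq0.le]
    congr 1
    field_simp
    ring
  have gain := rpow_mul_le_rpow_sub_sub_rpow hq0 j (a := j / (k + 1)) (by positivity)
  rw [rpow_natCast] at gain
  have key := mul_le_mul_of_nonneg_left (one_div_mul_sub_le_pow_mul_one_sub hq0.le hjk h)
    (by positivity : (0 : ℝ) ≤ j / (k + 1))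
  have : (j : ℝ) / (k + 1) * (1 / (j * (k - j))) = 1 / ((k + 1) * (k - j)) := by
    field_simp
  rw [hq'k, hq'j]
  linarith

lemma pow_sub_pow_seven_le {q : ℝ} (h0 : 0 ≤ q) (h1 : q ≤ 1) {j : ℕ} (hj : 2 ≤ j) (hj7 : j < 7) :
    q ^ j - q ^ 7 ≤ 1 / j := by
  -- for `j = 6`: `q^6 (1 - q) ≤ q^2 (1 - q) ≤ 4/27`
  have h26 : q ^ 6 ≤ q ^ 2 := pow_le_pow_of_le_one h0 h1 (by norm_num)
  interval_cases j <;> push_cast <;>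
    nlinarith [sq_nonneg (q - 5 / 6), sq_nonneg (q ^ 2 - 1 / 2), sq_nonneg (q ^ 2 - 7 / 10),
      sq_nonneg (q ^ 3 - 1 / 2),
      mul_nonneg (by linarith : (0 : ℝ) ≤ q + 1 / 3) (sq_nonneg (q - 2 / 3))]

lemma pow_sub_pow_eight_le {q : ℝ} (h0 : 0 ≤ q) (h1 : q ≤ 1) {j : ℕ} (hj : 2 ≤ j) (hj8 : j < 8) :
    q ^ j - q ^ 8 ≤ 1 / j + 1 / 57 := by
  have h27 : q ^ 7 ≤ q ^ 2 := pow_le_pow_of_le_one h0 h1 (by norm_num)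
  -- `j = 3` is the tight case: the maximum of `q^3 - q^8` is `≈ 0.3474`, at `q ≈ 41/50`
  have h := fun i : ℕ => mul_nonneg (pow_nonneg h0 i) (sq_nonneg (q - 41 / 50))
  interval_cases j <;> push_cast <;>
    nlinarith [h 3, h 4, h 5, h 6, sq_nonneg (q - 5 / 6), sq_nonneg (q ^ 2 - 1 / 2),
      sq_nonneg (q ^ 2 - 7 / 10), sq_nonneg (q ^ 3 - 1 / 2), sq_nonneg (q ^ 4 - 1 / 2),
      sq_nonneg (q ^ 2 - 3 / 4), mul_nonneg (sq_nonneg (q ^ 2 - 3 / 4)) (sq_nonneg q),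
      mul_nonneg (by linarith : (0 : ℝ) ≤ q + 1 / 3) (sq_nonneg (q - 2 / 3))]

lemma E_one (p : ℝ) : E 1 p = 1 := if_pos rfl

lemma E_of_two_le {k : ℕ} (hk : 2 ≤ k) (p : ℝ) : E k p = 1 - (1 - p) ^ k + 1 / k :=
  if_neg (by omega)

lemma E_sub_E_of_two_le {k j : ℕ} (hk : 2 ≤ k) (hj : 2 ≤ j) (p : ℝ) :
    E k p - E j p = (1 - p) ^ j - (1 - p) ^ k + 1 / k - 1 / j := by
  rw [E_of_two_le hk, E_of_two_le hj]
  ring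

lemma one_div_le_E {k : ℕ} (hk : 1 ≤ k) {p : ℝ} (hp : p ∈ Icc (0 : ℝ) 1) :
    1 / (k : ℝ) ≤ E k p := by
  obtain rfl | hk := hk.eq_or_lt
  · simp [E_one]
  · have : (1 - p) ^ k ≤ 1 := pow_le_one₀ (by linarith [hp.2]) (by linarith [hp.1])
    rw [E_of_two_le hk]
    linarith

lemma E_le_two {k : ℕ} (hk : 1 ≤ k) {p : ℝ} (hp : p ≤ 1) : E k p ≤ 2 := by
  obtain rfl | hk := hk.eq_or_lt
  · simp [E_one]
  · have : 0 ≤ (1 - p) ^ k := pow_nonneg (by linarith) k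
    have : 1 / (k : ℝ) ≤ 1 := by
      rw [div_le_one (by positivity)]
      exact_mod_cast hk.le
    rw [E_of_two_le hk]
    linarith

lemma E_le_mul_add_one_div {N : ℕ} (hN : 2 ≤ N) {p : ℝ} (hp : p ≤ 2) :
    E N p ≤ N * p + 1 / N := by
  have bernoulli := one_add_mul_le_pow (a := -p) (by linarith) N
  rw [← sub_eq_add_neg] at bernoulli
  rw [E_of_two_le hN]
  linarith

lemma E_sub_E_le_one_div {k j : ℕ} (hk : 2 ≤ k) (hj : 1 ≤ j) (hjk : j < 2 ∨ k ≤ j) {p : ℝ}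
    (hp : p ∈ Icc (0 : ℝ) 1) : E k p - E j p ≤ 1 / k := by
  have hq0 : 0 ≤ 1 - p := by linarith [hp.2]
  have hq1 : 1 - p ≤ 1 := by linarith [hp.1]
  rcases hjk with hj1 | hkj
  · obtain rfl : j = 1 := by omega
    rw [E_of_two_le hk, E_one]
    linarith [pow_nonneg hq0 k]
  · rw [E_sub_E_of_two_le hk (hk.trans hkj)]
    have : (0 : ℝ) < j := by exact_mod_cast (by omega : 0 < j)
    linarith [pow_le_pow_of_le_one hq0 hq1 hkj, one_div_pos.2 this]

lemma E_nonneg (j : ℕ+) {p : ℝ} (hp : p ∈ Icc (0 : ℝ) 1) : 0 ≤ E j p :=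
  (by positivity : (0 : ℝ) ≤ 1 / ((j : ℕ) : ℝ)).trans (one_div_le_E j.pos hp)

lemma Estar_nonneg {p : ℝ} (hp : p ∈ Icc (0 : ℝ) 1) : 0 ≤ Estar p :=
  le_ciInf fun j => E_nonneg j hp

lemma Estar_le_E {p : ℝ} (hp : p ∈ Icc (0 : ℝ) 1) (j : ℕ+) : Estar p ≤ E j p :=
  ciInf_le ⟨0, by rintro _ ⟨i, rfl⟩; exact E_nonneg i hp⟩ j

noncomputable def supLoss (k : ℕ) : ℝ := sSup (L k '' Ioo (0 : ℝ) 1)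

lemma bddAbove_image_L {k : ℕ} (hk : 1 ≤ k) : BddAbove (L k '' Ioo (0 : ℝ) 1) := by
  refine ⟨2, ?_⟩
  rintro _ ⟨p, hp, rfl⟩
  have := E_le_two hk hp.2.le
  have := Estar_nonneg (Ioo_subset_Icc_self hp)
  unfold L
  linarith

lemma E_sub_E_le_supLoss {k j : ℕ} (hk : 1 ≤ k) (hj : 1 ≤ j) {p : ℝ} (hp : p ∈ Ioo (0 : ℝ) 1) :
    E k p - E j p ≤ supLoss k :=
  calc E k p - E j p ≤ L k p :=
        sub_le_sub_left (Estar_le_E (Ioo_subset_Icc_self hp) ⟨j, hj⟩) _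
    _ ≤ supLoss k := le_csSup (bddAbove_image_L hk) (mem_image_of_mem _ hp)

lemma supLoss_le {k : ℕ} {c : ℝ} (h : ∀ p ∈ Ioo (0 : ℝ) 1, ∀ j, 1 ≤ j → E k p - E j p ≤ c) :
    supLoss k ≤ c := by
  refine csSup_le ((nonempty_Ioo.2 zero_lt_one).image _) ?_
  rintro _ ⟨p, hp, rfl⟩
  have : E k p - c ≤ Estar p := le_ciInf fun j => by linarith [h p hp j j.pos]
  unfold L
  linarith

lemma one_div_le_supLoss {k : ℕ} (hk : 1 ≤ k) : 1 / (k : ℝ) ≤ supLoss k := by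
  refine le_of_forall_pos_lt_add fun ε hε => ?_
  obtain ⟨n, hn⟩ := exists_nat_one_div_lt (half_pos hε)
  have hN : (0 : ℝ) < n + 2 := by positivity
  have hp : 1 / ((n : ℝ) + 2) ^ 2 ∈ Ioo (0 : ℝ) 1 :=
    ⟨by positivity, (div_lt_one (by positivity)).2 (by nlinarith)⟩
  have hsup := E_sub_E_le_supLoss hk (j := n + 2) (by omega) hp
  have hEk := one_div_le_E hk (Ioo_subset_Icc_self hp)
  have hEN := E_le_mul_add_one_div (N := n + 2) (by omega) (hp.2.le.trans one_le_two)
  have hNp : ((n + 2 : ℕ) : ℝ) * (1 / ((n : ℝ) + 2) ^ 2) = 1 / ((n + 2 : ℕ) : ℝ) := by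
    push_cast
    field_simp
  have h1N : 1 / ((n + 2 : ℕ) : ℝ) ≤ 1 / ((n : ℝ) + 1) := by
    push_cast
    gcongr
    linarith
  linarith

lemma supLoss_le_one_div_add {m : ℕ} (hm : 2 ≤ m) {c : ℝ} (hc : 0 ≤ c)
    (h : ∀ q ∈ Icc (0 : ℝ) 1, ∀ j, 2 ≤ j → j < m → q ^ j - q ^ m ≤ 1 / j + c) :
    supLoss m ≤ 1 / m + c := by
  refine supLoss_le fun p hp j hj => ?_
  by_cases hjm : 2 ≤ j ∧ j < m
  · have := h (1 - p) ⟨by linarith [hp.2], by linarith [hp.1]⟩ j hjm.1 hjm.2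
    rw [E_sub_E_of_two_le hm hjm.1]
    linarith
  · have := E_sub_E_le_one_div hm hj (by omega) (Ioo_subset_Icc_self hp)
    linarith

lemma supLoss_le_one_div {m : ℕ} (hm : 2 ≤ m) (hm7 : m ≤ 7) : supLoss m ≤ 1 / m := by
  simpa using supLoss_le_one_div_add hm le_rfl fun q hq j hj hjm => by
    have := pow_le_pow_of_le_one hq.1 hq.2 hm7
    have := pow_sub_pow_seven_le hq.1 hq.2 hj (by omega)
    linarith

lemma supLoss_eight_le : supLoss 8 ≤ 1 / 8 + 1 / 57 := by
  simpa using supLoss_le_one_div_add (m := 8) (by norm_num) (by norm_num)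
    fun q hq j hj hj8 => pow_sub_pow_eight_le hq.1 hq.2 hj hj8

lemma supLoss_succ_lt {k : ℕ} (hk : 1 ≤ k) (hk8 : k < 8) : supLoss (k + 1) < supLoss k := by
  refine lt_of_lt_of_le ?_ (one_div_le_supLoss hk)
  obtain rfl | hk7 := (Nat.le_of_lt_succ hk8).eq_or_lt
  · calc supLoss (7 + 1) ≤ 1 / 8 + 1 / 57 := supLoss_eight_le
      _ < 1 / ((7 : ℕ) : ℝ) := by norm_num
  · calc supLoss (k + 1) ≤ 1 / ((k + 1 : ℕ) : ℝ) := supLoss_le_one_div (by omega) (by omega)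
      _ < 1 / k := by
        have : (0 : ℝ) < k := by exact_mod_cast hk
        push_cast
        gcongr
        linarith

lemma E_sub_E_add_le_supLoss_succ {j k : ℕ} (hj : 2 ≤ j) (hjk : j < k) {p : ℝ}
    (hp : p ∈ Ioo (0 : ℝ) 1) (h : 1 / (j : ℝ) ≤ (1 - p) ^ j - (1 - p) ^ k) :
    E k p - E j p + (1 / (((k : ℝ) + 1) * (k - j)) - 1 / (k * (k + 1))) ≤ supLoss (k + 1) := by
  obtain ⟨q', hq', hgain⟩ :=
    exists_pow_sub_pow_succ_ge (by linarith [hp.2]) (by linarith [hp.1]) (by omega) hjk h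
  have hsup := E_sub_E_le_supLoss (k := k + 1) (by omega) (by omega : 1 ≤ j) (p := 1 - q')
    ⟨by linarith [hq'.2], by linarith [hq'.1]⟩
  rw [E_sub_E_of_two_le (by omega) hj, sub_sub_cancel] at hsup
  push_cast at hsup
  have hk0 : (0 : ℝ) < k := by exact_mod_cast (by omega : 0 < k)
  have : 1 / ((k : ℝ) + 1) - 1 / k = -(1 / (k * (k + 1))) := by
    field_simp
    ring
  rw [E_sub_E_of_two_le (by omega) hj]
  linarith

lemma supLoss_lt_succ_of_one_div_lt {k : ℕ} (hk : 3 ≤ k) (h : 1 / (k : ℝ) < supLoss k) :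
    supLoss k < supLoss (k + 1) := by
  have hk3 : (3 : ℝ) ≤ k := by exact_mod_cast hk
  set D : ℝ := 1 / (((k : ℝ) + 1) * (k - 2)) - 1 / (k * (k + 1))
  have hD : 0 < D := sub_pos.2 (one_div_lt_one_div_of_lt (by nlinarith) (by nlinarith))
  suffices supLoss k ≤ max (1 / (k : ℝ)) (supLoss (k + 1) - D) by
    rcases le_max_iff.1 this with h' | h' <;> linarith
  refine supLoss_le fun p hp j hj => ?_
  by_cases hjk : 2 ≤ j ∧ j < k
  · by_cases hv : 1 / (j : ℝ) ≤ (1 - p) ^ j - (1 - p) ^ k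
    · have := E_sub_E_add_le_supLoss_succ hjk.1 hjk.2 hp hv
      have hjk' : (j : ℝ) + 1 ≤ k := by exact_mod_cast hjk.2
      have hj2 : (2 : ℝ) ≤ j := by exact_mod_cast hjk.1
      have : 1 / (((k : ℝ) + 1) * (k - 2)) ≤ 1 / (((k : ℝ) + 1) * (k - j)) :=
        one_div_le_one_div_of_le (by nlinarith) (by nlinarith)
      exact le_max_of_le_right (by linarith)
    · rw [E_sub_E_of_two_le (by omega) hjk.1]
      exact le_max_of_le_left (by linarith)
  · exact le_max_of_le_left (E_sub_E_le_one_div (by omega) hj (by omega) (Ioo_subset_Icc_self hp))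

lemma one_div_lt_supLoss {k : ℕ} (hk : 8 ≤ k) : 1 / (k : ℝ) < supLoss k := by
  have hsup :=
    E_sub_E_le_supLoss (k := k) (j := 3) (p := 9 / 50) (by omega) (by norm_num) (by norm_num)
  rw [E_sub_E_of_two_le (by omega) (by norm_num)] at hsup
  have : ((41 : ℝ) / 50) ^ k ≤ (41 / 50) ^ 8 :=
    pow_le_pow_of_le_one (by norm_num) (by norm_num) hk
  norm_num at hsup this ⊢
  linarith

theorem sup_loss_unimodal :
    (∀ k : ℕ, 1 ≤ k → k < 8 →
      sSup (L (k+1) '' Set.Ioo (0:ℝ) 1) < sSup (L k '' Set.Ioo (0:ℝ) 1)) ∧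
    (∀ k : ℕ, 8 ≤ k →
      sSup (L k '' Set.Ioo (0:ℝ) 1) < sSup (L (k+1) '' Set.Ioo (0:ℝ) 1)) :=
  ⟨fun _ hk1 hk8 => supLoss_succ_lt hk1 hk8,
    fun _ hk => supLoss_lt_succ_of_one_div_lt (by omega) (one_div_lt_supLoss hk)⟩
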